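/- arXiv:1911.05962 — 4 statements merged into one kernel-verified Lean document; each statement's English description precedes it below -/
import Mathlib

section
/- Let Q be a smooth manifold, T*Q its cotangent bundle with canonical symplectic two-form Ω_Q = −dΘ_Q and bundle projection π_Q, and let h be a smooth function on T*Q with Hamiltonian vector field X_h defined by ι_{X_h}Ω_Q = dh. For a smooth function W on Q, regard its differential dW as a section of π_Q and define the vector field X_h^{dW} := Tπ_Q ∘ X_h ∘ dW on Q. Then the following are equivalent: (1) X_h and X_h^{dW} are dW-related, i.e. T(dW) ∘ X_h^{dW} = X_h ∘ dW; (2) d(h ∘ dW) = 0. -/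
noncomputable section

open scoped BigOperators

variable {E F : Type*} [NormedAddCommGroup E] [NormedSpace ℝ E]
  [NormedAddCommGroup F] [NormedSpace ℝ F]

/-- The exterior derivative of a smooth function, as a one-form. -/
def extDer0 (f : E → ℝ) : E → E → ℝ := fun x v => fderiv ℝ f x v

/-- The exterior derivative of a one-form. -/
def extDer1 (α : E → E → ℝ) : E → E → E → ℝ := fun x u v =>
  fderiv ℝ (fun y => α y v) x u - fderiv ℝ (fun y => α y u) x v

/-- The exterior derivative of a two-form. -/
def extDer2 (ω : E → E → E → ℝ) : E → E → E → E → ℝ := fun x u v w =>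
  fderiv ℝ (fun y => ω y v w) x u - fderiv ℝ (fun y => ω y u w) x v +
    fderiv ℝ (fun y => ω y u v) x w

/-- Wedge product of two one-forms. -/
def wedge11 (α β : E → E → ℝ) : E → E → E → ℝ := fun x u v =>
  α x u * β x v - α x v * β x u

/-- Wedge product of a one-form with a two-form. -/
def wedge12 (θ : E → E → ℝ) (ω : E → E → E → ℝ) : E → E → E → E → ℝ := fun x u v w =>
  θ x u * ω x v w - θ x v * ω x u w + θ x w * ω x u v

/-- Pullback of a one-form along a smooth map. -/
def pb1 (φ : E → F) (α : F → F → ℝ) : E → E → ℝ := fun x v => α (φ x) (fderiv ℝ φ x v)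

/-- Pullback of a two-form along a smooth map. -/
def pb2 (φ : E → F) (ω : F → F → F → ℝ) : E → E → E → ℝ := fun x u v =>
  ω (φ x) (fderiv ℝ φ x u) (fderiv ℝ φ x v)

/-- Model for the cotangent bundle `T*Q` of the manifold `Q = E`. -/
abbrev Cot (E : Type*) [NormedAddCommGroup E] [NormedSpace ℝ E] := E × (E →L[ℝ] ℝ)

/-- The tautological (canonical) one-form `Θ_Q` on `T*Q`. -/
def taut : Cot E → Cot E → ℝ := fun z v => z.2 v.1

/-- The canonical symplectic two-form `Ω_Q = -dΘ_Q` on `T*Q`. -/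
def canSymp : Cot E → Cot E → Cot E → ℝ := fun z u v => -(extDer1 taut z u v)

/-! In canonical coordinates `Ω_Q z (a, α) (b, β) = β a - α b`, so `X_h = (∂h/∂p, -∂h/∂q)`.
Along `dW` the chain rule and the symmetry of `D²W` give `d(h ∘ dW) = D²W (X_h)₁ - (X_h)₂`, while
`dW`-relatedness says `D²W (X_h)₁ = (X_h)₂`, its first component holding by definition of
`X_h^{dW}`. -/

lemma canSymp_apply (z u v : Cot E) : canSymp z u v = v.2 u.1 - u.2 v.1 := by
  have taut_deriv : ∀ w : Cot E, fderiv ℝ (fun y : Cot E => y.2 w.1) z =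
      (ContinuousLinearMap.apply ℝ ℝ w.1).comp (ContinuousLinearMap.snd ℝ E (E →L[ℝ] ℝ)) :=
    fun w => ((ContinuousLinearMap.apply ℝ ℝ w.1).comp (ContinuousLinearMap.snd ℝ E _)).fderiv
  simp [canSymp, extDer1, taut, taut_deriv]

lemma fderiv_graph_apply {g : E → F} {q : E}
    (hg : DifferentiableAt ℝ g q) (u : E) :
    fderiv ℝ (fun q' => (q', g q')) q u = (u, fderiv ℝ g q u) := by
  rw [differentiableAt_fun_id.fderiv_prodMk hg, fderiv_fun_id]
  rfl

lemma fderiv_comp_graph_apply {h : Cot E → ℝ} {g : E → E →L[ℝ] ℝ} {q : E} {x : Cot E}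
    (hh : DifferentiableAt ℝ h (q, g q)) (hg : DifferentiableAt ℝ g q)
    (hx : ∀ v, canSymp (q, g q) x v = fderiv ℝ h (q, g q) v) (u : E) :
    fderiv ℝ (fun q' => h (q', g q')) q u = fderiv ℝ g q u x.1 - x.2 u := by
  have hcomp : HasFDerivAt (fun q' => h (q', g q'))
      ((fderiv ℝ h (q, g q)).comp (fderiv ℝ (fun q' => (q', g q')) q)) q :=
    hh.hasFDerivAt.comp q (differentiableAt_id.prodMk hg).hasFDerivAt
  rw [hcomp.fderiv, ContinuousLinearMap.comp_apply, fderiv_graph_apply hg, ← hx, canSymp_apply]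

lemma fderiv_comp_differential {h : Cot E → ℝ} {W : E → ℝ} {q : E} {x : Cot E}
    (hh : DifferentiableAt ℝ h (q, fderiv ℝ W q)) (hW : ContDiffAt ℝ 2 W q)
    (hx : ∀ v, canSymp (q, fderiv ℝ W q) x v = fderiv ℝ h (q, fderiv ℝ W q) v) :
    fderiv ℝ (fun q' => h (q', fderiv ℝ W q')) q = fderiv ℝ (fderiv ℝ W) q x.1 - x.2 := by
  ext u
  rw [fderiv_comp_graph_apply hh ((hW.fderiv_right le_rfl).differentiableAt one_ne_zero) hx,
    hW.isSymmSndFDerivAt (by simp)]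
  rfl

theorem hamilton_jacobi_cotangent_general
    (h : Cot E → ℝ) (hh : ContDiff ℝ (⊤ : ℕ∞) h)
    (X : Cot E → Cot E)
    (hX : ∀ z v, canSymp z (X z) v = fderiv ℝ h z v)
    (W : E → ℝ) (hW : ContDiff ℝ (⊤ : ℕ∞) W)
    (γ : E → Cot E) (hγ : ∀ q, γ q = (q, fderiv ℝ W q))
    (Xγ : E → E) (hXγ : ∀ q, Xγ q = (X (γ q)).1) :
    (∀ q, fderiv ℝ γ q (Xγ q) = X (γ q)) ↔
      (∀ q, fderiv ℝ (fun q' => h (γ q')) q = 0) := by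
  obtain rfl : γ = fun q => (q, fderiv ℝ W q) := funext hγ
  obtain rfl : Xγ = fun q => (X (q, fderiv ℝ W q)).1 := funext hXγ
  refine forall_congr' fun q => ?_
  have hW2 : ContDiffAt ℝ 2 W q := hW.contDiffAt.of_le (by norm_cast)
  rw [fderiv_graph_apply ((hW2.fderiv_right le_rfl).differentiableAt one_ne_zero),
    fderiv_comp_differential (hh.differentiable (by simp) _) hW2 (hX _), sub_eq_zero, Prod.ext_iff]
  simp

/-- (Geometric Hamilton–Jacobi theorem on the cotangent bundle.)
`Q` is modeled on a finite-dimensional real vector space `E`, `T*Q = E × (E →L[ℝ] ℝ)`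
carries the canonical symplectic form `Ω_Q = -dΘ_Q`.  `X_h` is the Hamiltonian vector
field of `h` (`ι_{X_h}Ω_Q = dh`), `γ = dW` is the section given by the differential of
`W`, and `X_h^{dW} = Tπ_Q ∘ X_h ∘ dW`.  Then `X_h` and `X_h^{dW}` are `dW`-related iff
`d(h ∘ dW) = 0`. -/
theorem hamilton_jacobi_cotangent
    [FiniteDimensional ℝ E]
    (h : Cot E → ℝ) (hh : ContDiff ℝ (⊤ : ℕ∞) h)
    (X : Cot E → Cot E)
    (hX : ∀ z v, canSymp z (X z) v = fderiv ℝ h z v)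
    (W : E → ℝ) (hW : ContDiff ℝ (⊤ : ℕ∞) W)
    (γ : E → Cot E) (hγ : ∀ q, γ q = (q, fderiv ℝ W q))
    (Xγ : E → E) (hXγ : ∀ q, Xγ q = (X (γ q)).1) :
    (∀ q, fderiv ℝ γ q (Xγ q) = X (γ q)) ↔
      (∀ q, fderiv ℝ (fun q' => h (γ q')) q = 0) :=
  hamilton_jacobi_cotangent_general h hh X hX W hW γ hγ Xγ hXγ
end
end

section
/- Let Q be a smooth manifold, ϑ a closed one-form on Q, θ := π_Q*ϑ its pullback to T*Q, and Ω_θ := −dΘ_Q + θ∧Θ_Q the associated almost symplectic two-form on T*Q. Let h be a smooth function on T*Q and X_h the vector field defined by ι_{X_h}Ω_θ = d_θh, where d_θβ := dβ − θ∧β. Let γ be a one-form on Q satisfying d_ϑγ := dγ − ϑ∧γ = 0 (so that the image of γ is a Lagrangian submanifold of (T*Q, Ω_θ)), and set X_h^γ := Tπ_Q ∘ X_h ∘ γ. Then the following are equivalent: (1) X_h and X_h^γ are γ-related, i.e. Tγ ∘ X_h^γ = X_h ∘ γ; (2) d_ϑ(h ∘ γ) = 0. -/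
/-!
Write `X_h(γ q) = (a, b)` with `a = X_h^γ(q)` and `b ∈ T*_q Q`. Evaluating `ι_{X_h}Ω_θ = d_θ h`
on the tangent vector `Tγ(v) = (v, Dγ(v))` and using `d_ϑ γ = 0` to swap the two arguments of
`Dγ` gives `d_ϑ(h ∘ γ)(v) = (Dγ(a) − b)(v)`. Since `Tγ(a) = (a, Dγ(a))`, the vector fields are
`γ`-related exactly when `Dγ(a) = b`, i.e. when `d_ϑ(h ∘ γ) = 0`.
-/

noncomputable section

open scoped BigOperators

variable {E F : Type*} [NormedAddCommGroup E] [NormedSpace ℝ E]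
  [NormedAddCommGroup F] [NormedSpace ℝ F]

/-- The almost symplectic two-form `Ω_θ = -dΘ_Q + (π_Q*ϑ) ∧ Θ_Q` on `T*Q`,
for the Lee form `θ = π_Q*ϑ`. -/
def lcsForm (ϑ : E → E →L[ℝ] ℝ) : Cot E → Cot E → Cot E → ℝ := fun z u v =>
  canSymp z u v + (ϑ z.1 u.1 * taut z v - ϑ z.1 v.1 * taut z u)

theorem fderiv_taut_apply (z u v : Cot E) :
    fderiv ℝ (fun y : Cot E => taut y v) z u = u.2 v.1 :=
  congrArg (· u)
    ((ContinuousLinearMap.apply ℝ ℝ v.1).comp (ContinuousLinearMap.snd ℝ E (E →L[ℝ] ℝ))).fderiv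

theorem lcsForm_apply (ϑ : E → E →L[ℝ] ℝ) (z u v : Cot E) :
    lcsForm ϑ z u v =
      (v.2 u.1 - u.2 v.1) + (ϑ z.1 u.1 * z.2 v.1 - ϑ z.1 v.1 * z.2 u.1) := by
  rw [lcsForm, canSymp, extDer1, fderiv_taut_apply, fderiv_taut_apply]
  simp only [taut]
  ring

theorem extDer1_apply_of_differentiableAt {γ : E → E →L[ℝ] ℝ} {x : E}
    (hγ : DifferentiableAt ℝ γ x) (u v : E) :
    extDer1 (fun y w => γ y w) x u v = fderiv ℝ γ x u v - fderiv ℝ γ x v u := by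
  simp [extDer1, fderiv_clm_apply hγ (differentiableAt_const _)]

theorem hasFDerivAt_section {γ : E → E →L[ℝ] ℝ} {q : E} (hγ : DifferentiableAt ℝ γ q) :
    HasFDerivAt (fun q' => ((q', γ q') : Cot E))
      ((ContinuousLinearMap.id ℝ E).prod (fderiv ℝ γ q)) q :=
  (hasFDerivAt_id q).prodMk hγ.hasFDerivAt

theorem fderiv_section_apply {γ : E → E →L[ℝ] ℝ} {q : E} (hγ : DifferentiableAt ℝ γ q)
    (v : E) : fderiv ℝ (fun q' => ((q', γ q') : Cot E)) q v = (v, fderiv ℝ γ q v) := by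
  rw [(hasFDerivAt_section hγ).fderiv]
  rfl

theorem fderiv_comp_section_apply {γ : E → E →L[ℝ] ℝ} {h : Cot E → ℝ} {q : E}
    (hγ : DifferentiableAt ℝ γ q) (hh : DifferentiableAt ℝ h (q, γ q)) (v : E) :
    fderiv ℝ (fun q' => h (q', γ q')) q v = fderiv ℝ h (q, γ q) (v, fderiv ℝ γ q v) :=
  congrArg (· v) (hh.hasFDerivAt.comp q (hasFDerivAt_section hγ)).fderiv

theorem fderiv_comp_section_sub_mul_eq {ϑ γ : E → E →L[ℝ] ℝ} {h : Cot E → ℝ} {q : E}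
    (hγ : DifferentiableAt ℝ γ q) (hh : DifferentiableAt ℝ h (q, γ q)) (x : Cot E)
    (hx : ∀ v, lcsForm ϑ (q, γ q) x v = fderiv ℝ h (q, γ q) v - h (q, γ q) * ϑ q v.1)
    (hlag : ∀ v, extDer1 (fun y w => γ y w) q x.1 v = ϑ q x.1 * γ q v - ϑ q v * γ q x.1)
    (v : E) :
    fderiv ℝ (fun q' => h (q', γ q')) q v - h (q, γ q) * ϑ q v =
      fderiv ℝ γ q x.1 v - x.2 v := by
  have hcontract := hx (v, fderiv ℝ γ q v)
  have hswap := hlag v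
  rw [lcsForm_apply] at hcontract
  rw [extDer1_apply_of_differentiableAt hγ] at hswap
  rw [fderiv_comp_section_apply hγ hh]
  dsimp only at hcontract
  linarith

theorem hamilton_jacobi_lcs_general
    (ϑ : E → E →L[ℝ] ℝ)
    (h : Cot E → ℝ) (hh : ContDiff ℝ (⊤ : ℕ∞) h)
    (X : Cot E → Cot E)
    (hX : ∀ z v, lcsForm ϑ z (X z) v = fderiv ℝ h z v - h z * ϑ z.1 v.1)
    (γ : E → E →L[ℝ] ℝ) (hγs : ContDiff ℝ (⊤ : ℕ∞) γ)
    (hγlag : ∀ x u v,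
      extDer1 (fun y w => γ y w) x u v = ϑ x u * γ x v - ϑ x v * γ x u)
    (Γ : E → Cot E) (hΓ : ∀ q, Γ q = (q, γ q))
    (Xγ : E → E) (hXγ : ∀ q, Xγ q = (X (Γ q)).1) :
    (∀ q, fderiv ℝ Γ q (Xγ q) = X (Γ q)) ↔
      (∀ q v, fderiv ℝ (fun q' => h (Γ q')) q v - h (Γ q) * ϑ q v = 0) := by
  obtain rfl : Γ = fun q => (q, γ q) := funext hΓ
  obtain rfl : Xγ = fun q => (X (q, γ q)).1 := funext hXγ
  have hγd : Differentiable ℝ γ := hγs.differentiable (by simp)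
  have hhd : Differentiable ℝ h := hh.differentiable (by simp)
  have hdθ q v := fderiv_comp_section_sub_mul_eq (hγd q) (hhd _) (X (q, γ q))
    (hX _) (hγlag q _) v
  simp only [fderiv_section_apply (hγd _), hdθ, sub_eq_zero, Prod.ext_iff, true_and,
    ContinuousLinearMap.ext_iff]

/-- (Hamilton–Jacobi theorem on the locally conformal symplectic
cotangent bundle `T*_θ Q`.)  Here `ϑ` is a closed one-form on `Q = E`,
`θ = π_Q*ϑ`, `Ω_θ = -dΘ_Q + θ ∧ Θ_Q`, `X_h` satisfies `ι_{X_h}Ω_θ = d_θ h`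
(with `d_θ h = dh - h θ`), and `γ` is a one-form on `Q` with `d_ϑ γ = 0`
(so its image is Lagrangian in `(T*Q, Ω_θ)`).  Then `X_h` and
`X_h^γ = Tπ_Q ∘ X_h ∘ γ` are `γ`-related iff `d_ϑ(h ∘ γ) = 0`. -/
theorem hamilton_jacobi_lcs
    [FiniteDimensional ℝ E]
    (ϑ : E → E →L[ℝ] ℝ) (hϑs : ContDiff ℝ (⊤ : ℕ∞) ϑ)
    (hϑc : ∀ x u v, extDer1 (fun y w => ϑ y w) x u v = 0)
    (h : Cot E → ℝ) (hh : ContDiff ℝ (⊤ : ℕ∞) h)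
    (X : Cot E → Cot E)
    (hX : ∀ z v, lcsForm ϑ z (X z) v = fderiv ℝ h z v - h z * ϑ z.1 v.1)
    (γ : E → E →L[ℝ] ℝ) (hγs : ContDiff ℝ (⊤ : ℕ∞) γ)
    (hγlag : ∀ x u v,
      extDer1 (fun y w => γ y w) x u v = ϑ x u * γ x v - ϑ x v * γ x u)
    (Γ : E → Cot E) (hΓ : ∀ q, Γ q = (q, γ q))
    (Xγ : E → E) (hXγ : ∀ q, Xγ q = (X (Γ q)).1) :
    (∀ q, fderiv ℝ Γ q (Xγ q) = X (Γ q)) ↔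
      (∀ q v, fderiv ℝ (fun q' => h (Γ q')) q v - h (Γ q) * ϑ q v = 0) :=
  hamilton_jacobi_lcs_general ϑ h hh X hX γ hγs hγlag Γ hΓ Xγ hXγ
end
end

section
/- Let Q be a smooth manifold and γ = (γ^1,…,γ^k) a section of the k-cotangent bundle projection π_Q : T_k*Q → Q, where each γ^κ is a one-form on Q. Then for each κ one has γ*Ω^κ = −dγ^κ, where Ω^κ = (π^κ)*Ω_Q. Consequently, γ*Ω^κ = 0 for all κ if and only if every γ^κ is closed; i.e. the image of the section γ is a Lagrangian submanifold of the k-symplectic manifold (T_k*Q, [Ω^κ], V) if and only if γ is a closed section. -/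
noncomputable section

open scoped BigOperators

variable {E F : Type*} [NormedAddCommGroup E] [NormedSpace ℝ E]
  [NormedAddCommGroup F] [NormedSpace ℝ F]

/-- Model for the `k`-cotangent bundle `T_k*Q = T*Q ⊕_Q ⋯ ⊕_Q T*Q` of `Q = E`. -/
abbrev kCot (E : Type*) [NormedAddCommGroup E] [NormedSpace ℝ E] (k : ℕ) :=
  E × (Fin k → E →L[ℝ] ℝ)

/-- The projection `π^κ : T_k*Q → T*Q` onto the `κ`-th summand. -/
def kproj {k : ℕ} (κ : Fin k) : kCot E k → Cot E := fun z => (z.1, z.2 κ)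

/-- The canonical two-forms `Ω^κ = (π^κ)*Ω_Q` on `T_k*Q`
(`π^κ` is linear, so its pullback is plain composition). -/
def kForm {k : ℕ} (κ : Fin k) : kCot E k → kCot E k → kCot E k → ℝ :=
  fun z u v => canSymp (kproj κ z) (kproj κ u) (kproj κ v)
/-- The `k`-symplectic orthogonal of a set `S` of tangent vectors at `z`, with respect
to a family of two-forms `Ω^κ`. -/
def kPerp {k : ℕ} (Ω : Fin k → kCot E k → kCot E k → kCot E k → ℝ) (z : kCot E k)
    (S : Set (kCot E k)) : Set (kCot E k) :=
  {v | ∀ w ∈ S, ∀ κ, Ω κ z v w = 0}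

/-! In the linear coordinates of `T_k*Q = Q × (Fin k → Q*)` the forms
`Ω^κ(a, b) = b^κ(a_Q) - a^κ(b_Q)` have constant coefficients, and the tangent space of the image
of `γ` at `q` is the graph of `Dγ(q)`. Hence `γ*Ω^κ(u, v) = Dγ(v)^κ u - Dγ(u)^κ v = -dγ^κ(u, v)`.
The `k`-symplectic orthogonal of the graph of a linear map `L` consists of the `(w, η)` with
`η^κ u = L(u)^κ w` for all `u, κ`; it is the graph itself exactly when `L(u)^κ v` is symmetric
in `u, v`, which for `L = Dγ(q)` at every `q` says that every `γ^κ` is closed. -/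

theorem extDer1_taut (z a b : Cot E) : extDer1 taut z a b = a.2 b.1 - b.2 a.1 := by
  have htaut_linear : ∀ w : Cot E, (fun y : Cot E => taut y w) =
      ⇑((ContinuousLinearMap.apply ℝ ℝ w.1).comp (ContinuousLinearMap.snd ℝ E (E →L[ℝ] ℝ))) :=
    fun _ => rfl
  simp only [extDer1, htaut_linear, ContinuousLinearMap.fderiv]
  rfl

theorem kForm_apply {k : ℕ} (κ : Fin k) (z a b : kCot E k) :
    kForm κ z a b = b.2 κ a.1 - a.2 κ b.1 := by
  simp [kForm, canSymp, extDer1_taut, kproj]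

theorem fderiv_graph {f : E → F} {q : E} (hf : DifferentiableAt ℝ f q) :
    fderiv ℝ (fun y => (y, f y)) q = (ContinuousLinearMap.id ℝ E).prod (fderiv ℝ f q) := by
  rw [DifferentiableAt.fderiv_prodMk differentiableAt_fun_id hf, fderiv_fun_id]

theorem extDer1_component {k : ℕ} {γ : E → Fin k → E →L[ℝ] ℝ} {q : E}
    (hγ : DifferentiableAt ℝ γ q) (κ : Fin k) (u v : E) :
    extDer1 (fun y w => γ y κ w) q u v = fderiv ℝ γ q u κ v - fderiv ℝ γ q v κ u := by
  have hcomponent : ∀ w, HasFDerivAt (fun y => γ y κ w)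
      ((ContinuousLinearMap.apply ℝ ℝ w).comp
        ((ContinuousLinearMap.proj κ).comp (fderiv ℝ γ q))) q :=
    fun w => (ContinuousLinearMap.apply ℝ ℝ w).hasFDerivAt.comp q
      (hasFDerivAt_pi'.1 hγ.hasFDerivAt κ)
  simp only [extDer1, (hcomponent _).fderiv]
  rfl

theorem pb2_kForm_graph {k : ℕ} {γ : E → Fin k → E →L[ℝ] ℝ} {q : E}
    (hγ : DifferentiableAt ℝ γ q) (κ : Fin k) (u v : E) :
    pb2 (fun y => ((y, γ y) : kCot E k)) (kForm κ) q u v =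
      fderiv ℝ γ q v κ u - fderiv ℝ γ q u κ v := by
  simp [pb2, kForm_apply, fderiv_graph hγ]

theorem mem_kPerp_range_graph {k : ℕ} (L : E →L[ℝ] Fin k → E →L[ℝ] ℝ) (z w : kCot E k) :
    w ∈ kPerp (fun κ => kForm κ) z (Set.range ((ContinuousLinearMap.id ℝ E).prod L)) ↔
      ∀ κ u, w.2 κ u = L u κ w.1 := by
  simp only [kPerp, Set.mem_ofPred_eq, Set.forall_mem_range, ContinuousLinearMap.prod_apply,
    ContinuousLinearMap.id_apply, kForm_apply, sub_eq_zero]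
  exact forall_comm.trans (forall_congr' fun _ => forall_congr' fun _ => eq_comm)

theorem kPerp_range_graph_eq_iff {k : ℕ} (L : E →L[ℝ] Fin k → E →L[ℝ] ℝ) (z : kCot E k) :
    kPerp (fun κ => kForm κ) z (Set.range ((ContinuousLinearMap.id ℝ E).prod L)) =
        Set.range ((ContinuousLinearMap.id ℝ E).prod L) ↔
      ∀ κ u v, L u κ v = L v κ u := by
  constructor
  · intro hLagrangian κ u v
    have hu : ((u, L u) : kCot E k) ∈ kPerp (fun κ => kForm κ) z
        (Set.range ((ContinuousLinearMap.id ℝ E).prod L)) := by rw [hLagrangian]; exact ⟨u, rfl⟩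
    exact (mem_kPerp_range_graph L z _).1 hu κ v
  · intro hsymm
    ext w
    rw [mem_kPerp_range_graph]
    constructor
    · intro hw
      refine ⟨w.1, Prod.ext rfl (funext fun κ => ContinuousLinearMap.ext fun u => ?_)⟩
      simp [hw κ u, hsymm κ u w.1]
    · rintro ⟨v, rfl⟩ κ u
      exact hsymm κ v u

theorem section_pullback_k_symplectic_general
    {k : ℕ}
    (γ : E → Fin k → E →L[ℝ] ℝ) (hγs : ContDiff ℝ (⊤ : ℕ∞) γ)
    (Γ : E → kCot E k) (hΓ : ∀ q, Γ q = (q, γ q)) :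
    (∀ (κ : Fin k) q u v,
      pb2 Γ (kForm κ) q u v = -(extDer1 (fun y w => γ y κ w) q u v)) ∧
    ((∀ (κ : Fin k) q u v, pb2 Γ (kForm κ) q u v = 0) ↔
      (∀ (κ : Fin k) q u v, extDer1 (fun y w => γ y κ w) q u v = 0)) ∧
    ((∀ q, kPerp (fun κ : Fin k => kForm κ) (Γ q) (Set.range (fderiv ℝ Γ q)) =
        Set.range (fderiv ℝ Γ q)) ↔
      (∀ (κ : Fin k) q u v, extDer1 (fun y w => γ y κ w) q u v = 0)) := by
  obtain rfl : Γ = fun q => (q, γ q) := funext hΓ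
  have hγ : Differentiable ℝ γ := hγs.differentiable (by simp)
  have hpullback : ∀ (κ : Fin k) q u v, pb2 (fun q => ((q, γ q) : kCot E k)) (kForm κ) q u v =
      -(extDer1 (fun y w => γ y κ w) q u v) := fun κ q u v => by
    rw [pb2_kForm_graph (hγ q), extDer1_component (hγ q), neg_sub]
  have hclosed_iff : (∀ (κ : Fin k) q u v, extDer1 (fun y w => γ y κ w) q u v = 0) ↔
      ∀ q κ u v, fderiv ℝ γ q u κ v = fderiv ℝ γ q v κ u := by
    simp only [extDer1_component (hγ _), sub_eq_zero]
    exact ⟨fun h q κ => h κ q, fun h κ q => h q κ⟩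
  refine ⟨hpullback, by simp only [hpullback, neg_eq_zero], ?_⟩
  simp only [fderiv_graph (hγ _), kPerp_range_graph_eq_iff, hclosed_iff]

/-- For a section `γ = (γ^1,…,γ^k)` of `π_Q : T_k*Q → Q` (realized as
`Γ q = (q, γ q)`) one has `γ*Ω^κ = -dγ^κ`; consequently `γ*Ω^κ = 0` for all `κ` iff
every `γ^κ` is closed, i.e. the image of `γ` is a Lagrangian submanifold of the
`k`-symplectic manifold `(T_k*Q, [Ω^κ], V)` iff `γ` is a closed section. -/
theorem section_pullback_k_symplectic
    [FiniteDimensional ℝ E] {k : ℕ}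
    (γ : E → Fin k → E →L[ℝ] ℝ) (hγs : ContDiff ℝ (⊤ : ℕ∞) γ)
    (Γ : E → kCot E k) (hΓ : ∀ q, Γ q = (q, γ q)) :
    (∀ (κ : Fin k) q u v,
      pb2 Γ (kForm κ) q u v = -(extDer1 (fun y w => γ y κ w) q u v)) ∧
    ((∀ (κ : Fin k) q u v, pb2 Γ (kForm κ) q u v = 0) ↔
      (∀ (κ : Fin k) q u v, extDer1 (fun y w => γ y κ w) q u v = 0)) ∧
    ((∀ q, kPerp (fun κ : Fin k => kForm κ) (Γ q) (Set.range (fderiv ℝ Γ q)) =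
        Set.range (fderiv ℝ Γ q)) ↔
      (∀ (κ : Fin k) q u v, extDer1 (fun y w => γ y κ w) q u v = 0)) :=
  section_pullback_k_symplectic_general γ hγs Γ hΓ
end
end

section
/- Let Q = ℝ² ∖ {0} and consider T_k*Q with coordinates (x, y, p_x^κ, p_y^κ), the closed one-form θ = 2(x dy − y dx)/(x²+y²) (pulled back from Q), the two-forms Ω_θ^κ = dx∧dp_x^κ + dy∧dp_y^κ − 2((y p_y^κ + x p_x^κ)/(x²+y²)) dx∧dy, and the Hamiltonian H = ½ Σ_{κ=1}^k ((p_x^κ)² + (p_y^κ)²). Then a k-vector field X = (X_1,…,X_k) with X_κ = A_κ ∂_x + B_κ ∂_y + (C_κ)^λ ∂_{p_x^λ} + (D_κ)^λ ∂_{p_y^λ} satisfies the Hamilton–De Donder–Weyl equation Σ_{κ=1}^k ι_{X_κ}Ω_θ^κ = d_θH if and only if A_κ = p_x^κ, B_κ = p_y^κ for all κ, Σ_{κ=1}^k (C_κ)^κ = Σ_{κ=1}^k (y(p_y^κ)² − y(p_x^κ)² + 2x p_x^κ p_y^κ)/(x²+y²), and Σ_{κ=1}^k (D_κ)^κ = Σ_{κ=1}^k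 (x(p_y^κ)² − x(p_x^κ)² − 2y p_x^κ p_y^κ)/(x²+y²). -/
/-! Both sides of the Hamilton–De Donder–Weyl equation are linear in the test vector `v`, so the
equation holds iff their coefficients of `dx`, `dy`, `dp_x^κ`, `dp_y^κ` agree. The `dp`-coefficients
force `A_κ = p_x^κ` and `B_κ = p_y^κ`; substituted into the `dx`- and `dy`-coefficients, these turn
the remaining two equations into the stated traces of `C` and `D`. -/

noncomputable section

open scoped BigOperators

/-- Model of `T_k*Q` for `Q = ℝ² ∖ {0}`: points `((x,y), (p_x^κ, p_y^κ))`. -/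
abbrev ExModel (k : ℕ) := (ℝ × ℝ) × (Fin k → ℝ × ℝ)

/-- The Lee form `θ = 2(x dy - y dx)/(x²+y²)` pulled back to `T_k*Q`. -/
def exLee (k : ℕ) : ExModel k → ExModel k → ℝ := fun z v =>
  2 * (z.1.1 * v.1.2 - z.1.2 * v.1.1) / (z.1.1 ^ 2 + z.1.2 ^ 2)

/-- The two-forms
`Ω_θ^κ = dx∧dp_x^κ + dy∧dp_y^κ - 2((y p_y^κ + x p_x^κ)/(x²+y²)) dx∧dy`. -/
def exForm (k : ℕ) (κ : Fin k) : ExModel k → ExModel k → ExModel k → ℝ :=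
  fun z u v =>
    (u.1.1 * (v.2 κ).1 - v.1.1 * (u.2 κ).1) +
      (u.1.2 * (v.2 κ).2 - v.1.2 * (u.2 κ).2) -
      2 * ((z.1.2 * (z.2 κ).2 + z.1.1 * (z.2 κ).1) / (z.1.1 ^ 2 + z.1.2 ^ 2)) *
        (u.1.1 * v.1.2 - u.1.2 * v.1.1)

/-- The quadratic Hamiltonian `H = ½ Σ_κ ((p_x^κ)² + (p_y^κ)²)`. -/
def exHam (k : ℕ) : ExModel k → ℝ := fun z =>
  (1 / 2) * ∑ κ, ((z.2 κ).1 ^ 2 + (z.2 κ).2 ^ 2)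


def exPx (k : ℕ) (κ : Fin k) : ExModel k →L[ℝ] ℝ :=
  (ContinuousLinearMap.fst ℝ ℝ ℝ).comp
    ((ContinuousLinearMap.proj κ).comp (ContinuousLinearMap.snd ℝ (ℝ × ℝ) (Fin k → ℝ × ℝ)))

def exPy (k : ℕ) (κ : Fin k) : ExModel k →L[ℝ] ℝ :=
  (ContinuousLinearMap.snd ℝ ℝ ℝ).comp
    ((ContinuousLinearMap.proj κ).comp (ContinuousLinearMap.snd ℝ (ℝ × ℝ) (Fin k → ℝ × ℝ)))

@[simp] lemma exPx_apply (k : ℕ) (κ : Fin k) (w : ExModel k) : exPx k κ w = (w.2 κ).1 := rfl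

@[simp] lemma exPy_apply (k : ℕ) (κ : Fin k) (w : ExModel k) : exPy k κ w = (w.2 κ).2 := rfl

lemma hasFDerivAt_exHam (k : ℕ) (z : ExModel k) :
    HasFDerivAt (exHam k) (∑ κ, ((z.2 κ).1 • exPx k κ + (z.2 κ).2 • exPy k κ)) z := by
  have hx κ := (exPx k κ).hasFDerivAt (x := z)
  have hy κ := (exPy k κ).hasFDerivAt (x := z)
  have hH : exHam k =
      fun w => 1 / 2 * ∑ κ, (exPx k κ w * exPx k κ w + exPy k κ w * exPy k κ w) := by
    funext w
    simp [exHam, sq]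
  rw [hH]
  refine ((HasFDerivAt.fun_sum (u := Finset.univ) fun κ _ =>
    ((hx κ).mul (hx κ)).add ((hy κ).mul (hy κ))).const_mul (1 / 2 : ℝ)).congr_fderiv ?_
  refine ContinuousLinearMap.ext fun w => ?_
  simp only [smul_apply, sum_apply, add_apply, exPx_apply, exPy_apply, smul_eq_mul, Finset.mul_sum]
  exact Finset.sum_congr rfl fun κ _ => by ring

lemma fderiv_exHam_apply (k : ℕ) (z v : ExModel k) :
    fderiv ℝ (exHam k) z v = ∑ κ, ((z.2 κ).1 * (v.2 κ).1 + (z.2 κ).2 * (v.2 κ).2) := by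
  simp [(hasFDerivAt_exHam k z).fderiv]

lemma forall_coord_sum_eq_zero_iff {ι : Type*} [Fintype ι] [DecidableEq ι]
    (a b : ℝ) (c d : ι → ℝ) :
    (∀ v : (ℝ × ℝ) × (ι → ℝ × ℝ),
        v.1.1 * a + v.1.2 * b + ∑ i, ((v.2 i).1 * c i + (v.2 i).2 * d i) = 0) ↔
      a = 0 ∧ b = 0 ∧ (∀ i, c i = 0) ∧ ∀ i, d i = 0 := by
  constructor
  · intro h
    refine ⟨by simpa using h ((1, 0), 0), by simpa using h ((0, 1), 0),
      fun i => by simpa [Pi.single_apply, apply_ite] using h ((0, 0), Pi.single i (1, 0)),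
      fun i => by simpa [Pi.single_apply, apply_ite] using h ((0, 0), Pi.single i (0, 1))⟩
  · rintro ⟨rfl, rfl, hc, hd⟩ v
    simp [hc, hd]

/-- The `dx`- and `dy`-coefficients are arranged so that they become the two trace equations
once `A_κ = p_x^κ` and `B_κ = p_y^κ`. -/
lemma sum_exForm_sub_leeDiff_exHam_eq (k : ℕ) (z : ExModel k) (U : Fin k → ExModel k)
    (v : ExModel k) :
    ∑ κ, exForm k κ z (U κ) v - (fderiv ℝ (exHam k) z v - exHam k z * exLee k z v) =
      v.1.1 * (∑ κ, (z.1.2 * (z.2 κ).2 ^ 2 - z.1.2 * (z.2 κ).1 ^ 2 +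
              2 * z.1.1 * (z.2 κ).1 * (z.2 κ).2) / (z.1.1 ^ 2 + z.1.2 ^ 2)
          - ∑ κ, ((U κ).2 κ).1
          + ∑ κ, 2 * ((z.1.2 * (z.2 κ).2 + z.1.1 * (z.2 κ).1) / (z.1.1 ^ 2 + z.1.2 ^ 2)) *
              ((U κ).1.2 - (z.2 κ).2)) +
      v.1.2 * (∑ κ, (z.1.1 * (z.2 κ).2 ^ 2 - z.1.1 * (z.2 κ).1 ^ 2 -
              2 * z.1.2 * (z.2 κ).1 * (z.2 κ).2) / (z.1.1 ^ 2 + z.1.2 ^ 2)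
          - ∑ κ, ((U κ).2 κ).2
          - ∑ κ, 2 * ((z.1.2 * (z.2 κ).2 + z.1.1 * (z.2 κ).1) / (z.1.1 ^ 2 + z.1.2 ^ 2)) *
              ((U κ).1.1 - (z.2 κ).1)) +
      ∑ κ, ((v.2 κ).1 * ((U κ).1.1 - (z.2 κ).1) + (v.2 κ).2 * ((U κ).1.2 - (z.2 κ).2)) := by
  simp only [fderiv_exHam_apply, exForm, exHam, exLee, Finset.mul_sum, Finset.sum_mul,
    ← Finset.sum_add_distrib, ← Finset.sum_sub_distrib]
  exact Finset.sum_congr rfl fun κ _ => by ring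

/-- On `T_k*(ℝ² ∖ {0})` with the locally conformal `k`-symplectic
forms `Ω_θ^κ` and Hamiltonian `H = ½ Σ_κ ((p_x^κ)² + (p_y^κ)²)`, a `k`-vector field
`X_κ = A_κ ∂_x + B_κ ∂_y + (C_κ)^λ ∂_{p_x^λ} + (D_κ)^λ ∂_{p_y^λ}` satisfies the
Hamilton–De Donder–Weyl equation `Σ_κ ι_{X_κ}Ω_θ^κ = d_θH = dH - Hθ` iff
`A_κ = p_x^κ`, `B_κ = p_y^κ` for all `κ`,
`Σ_κ (C_κ)^κ = Σ_κ (y(p_y^κ)² - y(p_x^κ)² + 2x p_x^κ p_y^κ)/(x²+y²)` and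
`Σ_κ (D_κ)^κ = Σ_κ (x(p_y^κ)² - x(p_x^κ)² - 2y p_x^κ p_y^κ)/(x²+y²)`. -/
theorem example_hdw_punctured_plane (k : ℕ)
    (X : Fin k → ExModel k → ExModel k) :
    ∀ z : ExModel k, z.1 ≠ 0 →
      ((∀ v, ∑ κ, exForm k κ z (X κ z) v =
          fderiv ℝ (exHam k) z v - exHam k z * exLee k z v) ↔
        ((∀ κ : Fin k,
            (X κ z).1.1 = (z.2 κ).1 ∧ (X κ z).1.2 = (z.2 κ).2) ∧
          (∑ κ, ((X κ z).2 κ).1 =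
            ∑ κ, (z.1.2 * (z.2 κ).2 ^ 2 - z.1.2 * (z.2 κ).1 ^ 2 +
              2 * z.1.1 * (z.2 κ).1 * (z.2 κ).2) / (z.1.1 ^ 2 + z.1.2 ^ 2)) ∧
          (∑ κ, ((X κ z).2 κ).2 =
            ∑ κ, (z.1.1 * (z.2 κ).2 ^ 2 - z.1.1 * (z.2 κ).1 ^ 2 -
              2 * z.1.2 * (z.2 κ).1 * (z.2 κ).2) / (z.1.1 ^ 2 + z.1.2 ^ 2)))) := by
  intro z _
  simp_rw [← sub_eq_zero (b := fderiv ℝ (exHam k) z _ - _), sum_exForm_sub_leeDiff_exHam_eq,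
    forall_coord_sum_eq_zero_iff, sub_eq_zero]
  constructor
  · rintro ⟨hC, hD, hA, hB⟩
    simp only [hA, hB, sub_self, mul_zero, Finset.sum_const_zero, add_zero,
      sub_eq_zero] at hC hD
    exact ⟨fun κ => ⟨hA κ, hB κ⟩, hC.symm, hD.symm⟩
  · rintro ⟨hAB, hC, hD⟩
    simp [hAB, hC, hD]
end
end
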